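/- arXiv:1903.00429 — 5 statements merged into one kernel-verified Lean document; each statement's English description precedes it below -/
import Mathlib

section
/- Let (u(t))_{t≥0} be an Obstacle Gradient Flow. Then the function t ↦ E(u(t)) is nonincreasing and lies in W^{1,1}_{loc}(0,∞), the a.e. derivative u̇ lies in L²((0,∞),H), and for almost every t > 0 one has (d/dt) E(u(t)) = −‖u̇(t)‖². -/
open MeasureTheory Set Filter

noncomputable section

local notation "⟪" x ", " y "⟫" => @inner ℝ _ _ x y

variable {H : Type*} [NormedAddCommGroup H] [InnerProductSpace ℝ H] [CompleteSpace H]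

/-- Assumption 1: `E` is Fréchet differentiable with (Riesz) gradient `E'`, the gradient is
locally Lipschitz, `E` is sequentially weakly lower semicontinuous, bounded below by `α`,
and the gradient is bounded on balls. -/
structure Assumption1 (E : H → ℝ) (E' : H → H) (α : ℝ) : Prop where
  grad : ∀ u : H, HasGradientAt E (E' u) u
  locLip : LocallyLipschitz E'
  wlsc : ∀ (x : ℕ → H) (y : H),
    (∀ φ : H, Tendsto (fun n => ⟪x n, φ⟫) atTop (nhds ⟪y, φ⟫)) →
    E y ≤ Filter.liminf (fun n => E (x n)) atTop
  lowerBound : ∀ u : H, α ≤ E u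
  gradBdd : ∀ R : ℝ, 0 < R → ∃ M : ℝ, ∀ w : H, ‖w‖ ≤ R → ‖E' w‖ ≤ M

/-- An Obstacle Gradient Flow `u` (with a.e. derivative `u'`) with initial datum `u₀ ∈ C`. -/
structure IsOGF (C : Set H) (E' : H → H) (u u' : ℝ → H) (u₀ : H) : Prop where
  init : u 0 = u₀
  mem : ∀ t : ℝ, 0 ≤ t → u t ∈ C
  derivAe : ∀ᵐ t ∂(volume.restrict (Ioi (0:ℝ))), HasDerivAt u (u' t) t
  sqInt : ∀ T : ℝ, 0 < T → IntegrableOn (fun t => ‖u' t‖ ^ 2) (Ioc 0 T)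
  ftc : ∀ s t : ℝ, 0 ≤ s → s ≤ t → u t - u s = ∫ r in s..t, u' r
  fvi : ∀ᵐ t ∂(volume.restrict (Ioi (0:ℝ))),
    ∀ v ∈ C, 0 ≤ ⟪u' t, v - u t⟫ + ⟪E' (u t), v - u t⟫

/-! Testing the variational inequality with `v = u s`, `s` near `t`, shows that
`s ↦ ⟪u̇ t + ∇E (u t), u s⟫` has a local minimum at `t`; hence `⟪∇E (u t), u̇ t⟫ = -‖u̇ t‖²`
wherever `u` is differentiable, and the chain rule gives `(E ∘ u)' = -‖u̇‖²` a.e.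
Since `∇E` is bounded on balls, `E` is Lipschitz on a ball containing `u([s, t])`, so `E ∘ u`
is absolutely continuous together with `u = u s + ∫ u̇` and is the integral of its derivative.
Antitonicity follows, and `α ≤ E` bounds `∫₀ᵀ ‖u̇‖² ≤ E u₀ - α` uniformly in `T`. -/

open scoped NNReal Topology

theorem AbsolutelyContinuousOnInterval.of_dist_le_mul {X Y : Type*} [PseudoMetricSpace X]
    [PseudoMetricSpace Y] {f : ℝ → X} {g : ℝ → Y} {a b K : ℝ}
    (hg : AbsolutelyContinuousOnInterval g a b)
    (hfg : ∀ x ∈ uIcc a b, ∀ y ∈ uIcc a b, dist (f x) (f y) ≤ K * dist (g x) (g y)) :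
    AbsolutelyContinuousOnInterval f a b := by
  unfold AbsolutelyContinuousOnInterval at hg ⊢
  refine squeeze_zero' (Eventually.of_forall fun _ ↦ Finset.sum_nonneg fun _ _ ↦ dist_nonneg)
    ?_ (by simpa using hg.const_mul K)
  rw [eventually_inf_principal]
  filter_upwards with ⟨n, I⟩ hnI
  rw [Finset.mul_sum]
  exact Finset.sum_le_sum fun i hi ↦ hfg _ (hnI.1 i hi).1 _ (hnI.1 i hi).2

theorem LipschitzOnWith.comp_absolutelyContinuousOnInterval {X Y : Type*} [PseudoMetricSpace X]
    [PseudoMetricSpace Y] {φ : X → Y} {K : ℝ≥0} {s : Set X} {f : ℝ → X} {a b : ℝ}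
    (hφ : LipschitzOnWith K φ s) (hf : AbsolutelyContinuousOnInterval f a b)
    (hfs : MapsTo f (uIcc a b) s) : AbsolutelyContinuousOnInterval (fun x ↦ φ (f x)) a b :=
  hf.of_dist_le_mul fun _ hx _ hy ↦ hφ.dist_le_mul _ (hfs hx) _ (hfs hy)

theorem IntervalIntegrable.absolutelyContinuousOnInterval_intervalIntegral'
    {F : Type*} [NormedAddCommGroup F] [NormedSpace ℝ F] {f : ℝ → F} {a b c : ℝ}
    (hf : IntervalIntegrable f volume a b) (hc : c ∈ uIcc a b) :
    AbsolutelyContinuousOnInterval (fun x ↦ ∫ r in c..x, f r) a b := by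
  refine (hf.norm.absolutelyContinuousOnInterval_intervalIntegral hc).of_dist_le_mul (K := 1)
    fun x hx y hy ↦ ?_
  rw [one_mul, dist_eq_norm, dist_eq_norm, Real.norm_eq_abs,
    intervalIntegral.integral_interval_sub_left (hf.mono_set (uIcc_subset_uIcc hc hx))
      (hf.mono_set (uIcc_subset_uIcc hc hy)),
    intervalIntegral.integral_interval_sub_left (hf.norm.mono_set (uIcc_subset_uIcc hc hx))
      (hf.norm.mono_set (uIcc_subset_uIcc hc hy))]
  exact intervalIntegral.norm_integral_le_abs_integral_norm

theorem Convex.lipschitzOnWith_of_norm_hasGradientAt_le {F : Type*} [NormedAddCommGroup F]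
    [InnerProductSpace ℝ F] [CompleteSpace F] {f : F → ℝ} {f' : F → F} {s : Set F} {K : ℝ≥0}
    (hs : Convex ℝ s) (hf : ∀ x ∈ s, HasGradientAt f (f' x) x) (bound : ∀ x ∈ s, ‖f' x‖ ≤ K) :
    LipschitzOnWith K f s :=
  hs.lipschitzOnWith_of_nnnorm_hasFDerivWithin_le
    (fun x hx ↦ (hf x hx).hasFDerivAt.hasFDerivWithinAt)
    fun x hx ↦ by
      rw [← NNReal.coe_le_coe, coe_nnnorm, LinearIsometryEquiv.norm_map]
      exact bound x hx

theorem HasGradientAt.comp_hasDerivAt {F : Type*} [NormedAddCommGroup F]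
    [InnerProductSpace ℝ F] [CompleteSpace F] {f : F → ℝ} {g : F} {u : ℝ → F} {u' : F} {t : ℝ}
    (hf : HasGradientAt f g (u t)) (hu : HasDerivAt u u' t) :
    HasDerivAt (fun s ↦ f (u s)) ⟪g, u'⟫ t := by
  simpa [Function.comp_def] using hf.hasFDerivAt.comp_hasDerivAt t hu

theorem inner_eq_zero_of_hasDerivAt_of_forall_inner_nonneg {F : Type*} [NormedAddCommGroup F]
    [InnerProductSpace ℝ F] {C : Set F} {u : ℝ → F} {u' w : F} {t : ℝ}
    (hu : HasDerivAt u u' t) (hC : ∀ᶠ s in 𝓝 t, u s ∈ C) (hw : ∀ v ∈ C, 0 ≤ ⟪w, v - u t⟫) :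
    ⟪w, u'⟫ = 0 := by
  have hderiv : HasDerivAt (fun s ↦ ⟪w, u s⟫) ⟪w, u'⟫ t := by
    simpa [Function.comp_def] using (innerSL ℝ w).hasFDerivAt.comp_hasDerivAt t hu
  refine IsLocalMin.hasDerivAt_eq_zero ?_ hderiv
  filter_upwards [hC] with s hs
  simpa [inner_sub_right] using hw (u s) hs

namespace IsOGF

variable {F : Type*} [NormedAddCommGroup F] [InnerProductSpace ℝ F] {C : Set F} {E' : F → F}
  {u u' : ℝ → F} {u₀ : F}

theorem inner_grad_deriv_ae (hu : IsOGF C E' u u' u₀) :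
    ∀ᵐ t ∂(volume.restrict (Ioi 0)), ⟪E' (u t), u' t⟫ = -‖u' t‖ ^ 2 := by
  filter_upwards [hu.derivAe, hu.fvi, ae_restrict_mem measurableSet_Ioi] with t hderiv hvi ht
  have hC : ∀ᶠ s in 𝓝 t, u s ∈ C := by
    filter_upwards [Ioi_mem_nhds (mem_Ioi.1 ht)] with s hs using hu.mem s (le_of_lt hs)
  have h := inner_eq_zero_of_hasDerivAt_of_forall_inner_nonneg hderiv hC
    (w := u' t + E' (u t)) fun v hv ↦ by simpa [inner_add_left] using hvi v hv
  rw [inner_add_left, real_inner_self_eq_norm_sq] at h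
  linarith

variable [CompleteSpace F]

theorem aestronglyMeasurable_deriv (hu : IsOGF C E' u u' u₀) :
    AEStronglyMeasurable u' (volume.restrict (Ioi 0)) :=
  (stronglyMeasurable_deriv u).aestronglyMeasurable.congr <| by
    filter_upwards [hu.derivAe] with t ht using ht.deriv

theorem intervalIntegrable_deriv (hu : IsOGF C E' u u' u₀) {s t : ℝ} (hs : 0 ≤ s) (ht : 0 ≤ t) :
    IntervalIntegrable u' volume s t := by
  set T := max s t + 1
  have hT : 0 < T := by positivity
  have hmem : MemLp u' 2 (volume.restrict (Ioc 0 T)) :=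
    (memLp_two_iff_integrable_sq_norm (hu.aestronglyMeasurable_deriv.mono_measure
      (Measure.restrict_mono Ioc_subset_Ioi_self le_rfl))).2 (hu.sqInt T hT)
  have : Fact (volume (Ioc 0 T) < ⊤) := ⟨measure_Ioc_lt_top⟩
  rw [intervalIntegrable_iff]
  refine IntegrableOn.mono_set (hmem.integrable one_le_two) fun r hr ↦ ?_
  rw [uIoc, mem_Ioc] at hr
  exact ⟨(le_min hs ht).trans_lt hr.1, hr.2.trans (by simp [T])⟩

theorem absolutelyContinuousOnInterval (hu : IsOGF C E' u u' u₀) {s t : ℝ} (hs : 0 ≤ s)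
    (hst : s ≤ t) : AbsolutelyContinuousOnInterval u s t := by
  have hint := hu.intervalIntegrable_deriv hs (hs.trans hst)
  refine (hint.absolutelyContinuousOnInterval_intervalIntegral' left_mem_uIcc).of_dist_le_mul
    (K := 1) fun x hx y hy ↦ ?_
  rw [uIcc_of_le hst] at hx hy
  rw [one_mul, ← hu.ftc s x hs hx.1, ← hu.ftc s y hs hy.1, dist_sub_right]

variable {E : F → ℝ}

theorem hasDerivAt_energy_ae (hu : IsOGF C E' u u' u₀) (hE : ∀ x, HasGradientAt E (E' x) x) :
    ∀ᵐ t ∂(volume.restrict (Ioi 0)), HasDerivAt (fun s ↦ E (u s)) (-‖u' t‖ ^ 2) t := by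
  filter_upwards [hu.derivAe, hu.inner_grad_deriv_ae] with t hderiv hinner
  exact hinner ▸ (hE (u t)).comp_hasDerivAt hderiv

theorem absolutelyContinuousOnInterval_energy (hu : IsOGF C E' u u' u₀)
    (hE : ∀ x, HasGradientAt E (E' x) x)
    (hbdd : ∀ R : ℝ, 0 < R → ∃ M : ℝ, ∀ w : F, ‖w‖ ≤ R → ‖E' w‖ ≤ M) {s t : ℝ} (hs : 0 ≤ s)
    (hst : s ≤ t) : AbsolutelyContinuousOnInterval (fun r ↦ E (u r)) s t := by
  have hac := hu.absolutelyContinuousOnInterval hs hst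
  obtain ⟨R, hR⟩ := hac.exists_bound
  obtain ⟨M, hM⟩ := hbdd (max R 1) (by positivity)
  have hlip : LipschitzOnWith (Real.toNNReal M) E (Metric.closedBall 0 (max R 1)) :=
    (convex_closedBall 0 _).lipschitzOnWith_of_norm_hasGradientAt_le (fun x _ ↦ hE x)
      fun x hx ↦ (hM x (mem_closedBall_zero_iff.1 hx)).trans (Real.le_coe_toNNReal M)
  exact hlip.comp_absolutelyContinuousOnInterval hac fun r hr ↦
    mem_closedBall_zero_iff.2 ((hR r hr).trans (le_max_left _ _))

theorem energy_sub_eq_integral (hu : IsOGF C E' u u' u₀) (hE : ∀ x, HasGradientAt E (E' x) x)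
    (hbdd : ∀ R : ℝ, 0 < R → ∃ M : ℝ, ∀ w : F, ‖w‖ ≤ R → ‖E' w‖ ≤ M) {s t : ℝ} (hs : 0 ≤ s)
    (hst : s ≤ t) : E (u t) - E (u s) = ∫ r in s..t, -‖u' r‖ ^ 2 := by
  rw [← (hu.absolutelyContinuousOnInterval_energy hE hbdd hs hst).integral_deriv_eq_sub]
  refine intervalIntegral.integral_congr_ae ?_
  filter_upwards [(ae_restrict_iff' measurableSet_Ioi).1 (hu.hasDerivAt_energy_ae hE)]
    with r hr hrst
  rw [uIoc_of_le hst] at hrst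
  exact (hr (hs.trans_lt hrst.1)).deriv

theorem antitoneOn_energy (hu : IsOGF C E' u u' u₀) (hE : ∀ x, HasGradientAt E (E' x) x)
    (hbdd : ∀ R : ℝ, 0 < R → ∃ M : ℝ, ∀ w : F, ‖w‖ ≤ R → ‖E' w‖ ≤ M) :
    AntitoneOn (fun t ↦ E (u t)) (Ici 0) := by
  intro s hs t _ hst
  have hdiss := hu.energy_sub_eq_integral hE hbdd hs hst
  have hnonneg : 0 ≤ ∫ r in s..t, ‖u' r‖ ^ 2 :=
    intervalIntegral.integral_nonneg hst fun _ _ ↦ sq_nonneg _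
  rw [intervalIntegral.integral_neg] at hdiss
  linarith

theorem memLp_deriv (hu : IsOGF C E' u u' u₀) (hE : ∀ x, HasGradientAt E (E' x) x)
    (hbdd : ∀ R : ℝ, 0 < R → ∃ M : ℝ, ∀ w : F, ‖w‖ ≤ R → ‖E' w‖ ≤ M) {α : ℝ}
    (hα : ∀ x, α ≤ E x) : MemLp u' 2 (volume.restrict (Ioi 0)) := by
  refine (memLp_two_iff_integrable_sq_norm hu.aestronglyMeasurable_deriv).2 <|
    integrableOn_Ioi_of_intervalIntegral_norm_bounded (E u₀ - α) 0
      (fun n : ℕ ↦ (hu.sqInt (n + 1) (by positivity)).mono_set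
        (Ioc_subset_Ioc_right (by linarith))) tendsto_natCast_atTop_atTop
      (Eventually.of_forall fun n ↦ ?_)
  have h := hu.energy_sub_eq_integral hE hbdd le_rfl n.cast_nonneg
  rw [intervalIntegral.integral_neg, hu.init] at h
  simp only [norm_pow, norm_norm]
  linarith [hα (u n)]

end IsOGF

theorem energy_dissipation_general
    (E : H → ℝ) (E' : H → H) (α : ℝ) (hE : Assumption1 E E' α)
    (C : Set H)
    (u u' : ℝ → H) (u₀ : H) (hu : IsOGF C E' u u' u₀) :
    AntitoneOn (fun t => E (u t)) (Ici 0) ∧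
    (∀ᵐ t ∂(volume.restrict (Ioi (0:ℝ))),
        HasDerivAt (fun s => E (u s)) (-‖u' t‖ ^ 2) t) ∧
    (∀ s t : ℝ, 0 ≤ s → s ≤ t → E (u t) - E (u s) = ∫ r in s..t, -‖u' r‖ ^ 2) ∧
    MemLp u' 2 (volume.restrict (Ioi (0:ℝ))) :=
  ⟨hu.antitoneOn_energy hE.grad hE.gradBdd, hu.hasDerivAt_energy_ae hE.grad,
    fun _ _ hs hst ↦ hu.energy_sub_eq_integral hE.grad hE.gradBdd hs hst,
    hu.memLp_deriv hE.grad hE.gradBdd hE.lowerBound⟩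

/-- **Energy dissipation.** Along an Obstacle Gradient Flow, `t ↦ E(u(t))` is nonincreasing and
belongs to `W^{1,1}_loc(0,∞)`, the derivative `u̇` lies in `L²((0,∞),H)`, and for a.e. `t > 0`
one has `(d/dt) E(u(t)) = -‖u̇(t)‖²`. -/
theorem energy_dissipation
    (E : H → ℝ) (E' : H → H) (α : ℝ) (hE : Assumption1 E E' α)
    (C : Set H) (hCne : C.Nonempty) (hCcl : IsClosed C) (hCcv : Convex ℝ C)
    (u u' : ℝ → H) (u₀ : H) (hu₀ : u₀ ∈ C) (hu : IsOGF C E' u u' u₀) :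
    AntitoneOn (fun t => E (u t)) (Ici 0) ∧
    (∀ᵐ t ∂(volume.restrict (Ioi (0:ℝ))),
        HasDerivAt (fun s => E (u s)) (-‖u' t‖ ^ 2) t) ∧
    (∀ s t : ℝ, 0 ≤ s → s ≤ t → E (u t) - E (u s) = ∫ r in s..t, -‖u' r‖ ^ 2) ∧
    MemLp u' 2 (volume.restrict (Ioi (0:ℝ))) :=
  energy_dissipation_general E E' α hE C u u' u₀ hu
end
end

section
/- A nonempty closed convex set C ⊆ H has the Half Plane Residuum (HPR) property if and only if for all w₁, w₂ ∈ H one has (w₁ − π_C(w₁), w₂ − π_C(w₂)) ≥ 0. -/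
/-!
Everything follows from the variational inequality `⟪w - π w, z - π w⟫ ≤ 0` for `z ∈ C`.
Applied at `w₁` to `z = π w₁ + π w₂ - w₂`, which lies in `C` by HPR, it gives the sign condition.
Conversely, for `x = u + π v - v` one has `u - π x = (x - π x) + (v - π v)`, so the variational
inequality at `x` and the sign condition force `‖x - π x‖² ≤ 0`, i.e. `x = π x ∈ C`.
-/

open MeasureTheory Set Filter

noncomputable section

local notation "⟪" x ", " y "⟫" => @inner ℝ _ _ x y

section NearestPoint

variable {E : Type*} [NormedAddCommGroup E] [InnerProductSpace ℝ E] {C : Set E} {v p : E}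

theorem real_inner_sub_le_zero_of_forall_norm_sub_le (hC : Convex ℝ C) (hp : p ∈ C)
    (hmin : ∀ z ∈ C, ‖v - p‖ ≤ ‖v - z‖) : ∀ z ∈ C, ⟪v - p, z - p⟫ ≤ 0 := by
  have : Nonempty C := ⟨⟨p, hp⟩⟩
  refine (norm_eq_iInf_iff_real_inner_le_zero hC hp).mp (le_antisymm ?_ ?_)
  · exact le_ciInf fun z => hmin z z.2
  · exact ciInf_le ⟨0, by rintro _ ⟨z, rfl⟩; exact norm_nonneg _⟩ (⟨p, hp⟩ : C)

theorem eq_of_forall_norm_sub_le_of_real_inner_nonneg (hC : Convex ℝ C) (hp : p ∈ C)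
    (hmin : ∀ z ∈ C, ‖v - p‖ ≤ ‖v - z‖) {u : E} (hu : u ∈ C) (h : 0 ≤ ⟪v - p, u - v⟫) :
    v = p := by
  have hvi := real_inner_sub_le_zero_of_forall_norm_sub_le hC hp hmin u hu
  rw [show u - p = (v - p) + (u - v) by abel, inner_add_right,
    real_inner_self_eq_norm_sq] at hvi
  have hsq : ‖v - p‖ ^ 2 = 0 := le_antisymm (by linarith) (sq_nonneg _)
  exact sub_eq_zero.mp (norm_eq_zero.mp (pow_eq_zero_iff two_ne_zero |>.mp hsq))

end NearestPoint

variable {H : Type*} [NormedAddCommGroup H] [InnerProductSpace ℝ H] [CompleteSpace H]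

theorem hpr_iff_inner_nonneg_general
    (C : Set H) (hCcv : Convex ℝ C)
    (P : H → H)
    (hP : ∀ v : H, P v ∈ C ∧ ∀ z ∈ C, ‖v - P v‖ ≤ ‖v - z‖) :
    (∀ u ∈ C, ∀ v : H, u + P v - v ∈ C) ↔
      (∀ w₁ w₂ : H, 0 ≤ ⟪w₁ - P w₁, w₂ - P w₂⟫) := by
  constructor
  · intro hpr w₁ w₂
    have h := real_inner_sub_le_zero_of_forall_norm_sub_le hCcv (hP w₁).1 (hP w₁).2 _
      (hpr (P w₁) (hP w₁).1 w₂)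
    rw [show P w₁ + P w₂ - w₂ - P w₁ = -(w₂ - P w₂) by abel, inner_neg_right] at h
    linarith
  · intro hin u hu v
    have hfix : u + P v - v = P (u + P v - v) :=
      eq_of_forall_norm_sub_le_of_real_inner_nonneg hCcv (hP _).1 (hP _).2 hu
        (by simpa only [show u - (u + P v - v) = v - P v by abel] using hin _ v)
    exact hfix ▸ (hP _).1

/-- **Justification of the name (Half Plane Residuum property).** A nonempty closed convex set
`C` has the HPR property (for every `u ∈ C` and `v ∈ H`, `u + π_C(v) - v ∈ C`, where `P = π_C`
is the nearest point projection onto `C`) if and only if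
`(w₁ - π_C(w₁), w₂ - π_C(w₂)) ≥ 0` for all `w₁, w₂ ∈ H`. -/
theorem hpr_iff_inner_nonneg
    (C : Set H) (hCne : C.Nonempty) (hCcl : IsClosed C) (hCcv : Convex ℝ C)
    (P : H → H)
    (hP : ∀ v : H, P v ∈ C ∧ ∀ z ∈ C, ‖v - P v‖ ≤ ‖v - z‖) :
    (∀ u ∈ C, ∀ v : H, u + P v - v ∈ C) ↔
      (∀ w₁ w₂ : H, 0 ≤ ⟪w₁ - P w₁, w₂ - P w₂⟫) :=
  hpr_iff_inner_nonneg_general C hCcv P hP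
end
end

section
/- Let (u(t))_{t≥0} be an Obstacle Gradient Flow in C, and assume that C has the Half Plane Residuum (HPR) property. Then for almost every t > 0, dist(∇E(u(t)), C) ≤ dist(−u̇(t), C), where dist(x,C) := inf_{θ∈C} ‖x − θ‖. -/
open MeasureTheory Set Filter

noncomputable section

local notation "⟪" x ", " y "⟫" => @inner ℝ _ _ x y

variable {H : Type*} [NormedAddCommGroup H] [InnerProductSpace ℝ H] [CompleteSpace H]

/-!
Write `g = ∇E(u(t))`, `w = -u̇(t)` and let `p = π_C g`. Testing the flow variational inequality
with the HPR point `u(t) + p - g ∈ C` gives `⟪g - p, g - w⟫ ≤ 0`, while the obtuse-angle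
characterisation of the projection gives `⟪g - p, z - p⟫ ≤ 0` for every `z ∈ C`. Adding these to
`⟪g - p, w - z⟫ ≤ ‖g - p‖ ‖w - z‖` yields `‖g - p‖ ≤ ‖w - z‖`, so
`dist(g, C) ≤ ‖g - p‖ ≤ dist(w, C)`.
-/

section Projection

variable {F : Type*} [NormedAddCommGroup F] [InnerProductSpace ℝ F] {C : Set F}

lemma real_inner_sub_nearest_le_zero (hC : Convex ℝ C) {v p : F} (hp : p ∈ C)
    (hmin : ∀ z ∈ C, ‖v - p‖ ≤ ‖v - z‖) : ∀ z ∈ C, ⟪v - p, z - p⟫ ≤ 0 := by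
  have : Nonempty C := ⟨⟨p, hp⟩⟩
  refine (norm_eq_iInf_iff_real_inner_le_zero hC hp).1 (le_antisymm ?_ ?_)
  · exact le_ciInf fun z => hmin z z.2
  · exact ciInf_le ⟨0, Set.forall_mem_range.2 fun z => norm_nonneg _⟩ (⟨p, hp⟩ : C)

lemma norm_sub_nearest_le_infDist (hC : Convex ℝ C) {g w p : F} (hp : p ∈ C)
    (hmin : ∀ z ∈ C, ‖g - p‖ ≤ ‖g - z‖) (hgw : ⟪g - p, g - w⟫ ≤ 0) :
    ‖g - p‖ ≤ Metric.infDist w C := by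
  refine (Metric.le_infDist ⟨p, hp⟩).2 fun z hz => ?_
  have hsq : ‖g - p‖ ^ 2 ≤ ‖g - p‖ * ‖w - z‖ :=
    calc ‖g - p‖ ^ 2
        = ⟪g - p, g - w⟫ + ⟪g - p, w - z⟫ + ⟪g - p, z - p⟫ := by
          rw [← real_inner_self_eq_norm_sq, ← inner_add_right, ← inner_add_right]
          abel_nf
      _ ≤ ‖g - p‖ * ‖w - z‖ := by
          linarith [real_inner_le_norm (g - p) (w - z),
            real_inner_sub_nearest_le_zero hC hp hmin z hz]
  rw [dist_eq_norm]
  nlinarith [norm_nonneg (g - p), norm_nonneg (w - z)]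

lemma infDist_le_infDist_neg_of_variational_ineq (hC : Convex ℝ C) {P : F → F}
    (hP : ∀ v : F, P v ∈ C ∧ ∀ z ∈ C, ‖v - P v‖ ≤ ‖v - z‖)
    (hHPR : ∀ u ∈ C, ∀ v : F, u + P v - v ∈ C) {x v g : F} (hx : x ∈ C)
    (hvi : ∀ y ∈ C, 0 ≤ ⟪v, y - x⟫ + ⟪g, y - x⟫) :
    Metric.infDist g C ≤ Metric.infDist (-v) C := by
  have hgv : ⟪g - P g, g - -v⟫ ≤ 0 := by
    have := hvi _ (hHPR x hx g)
    rw [show x + P g - g - x = -(g - P g) by abel, ← inner_add_left, inner_neg_right] at this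
    rw [sub_neg_eq_add, real_inner_comm, add_comm g v]
    linarith
  calc Metric.infDist g C ≤ ‖g - P g‖ := by
        rw [← dist_eq_norm]; exact Metric.infDist_le_dist_of_mem (hP g).1
    _ ≤ Metric.infDist (-v) C := norm_sub_nearest_le_infDist hC (hP g).1 (hP g).2 hgv

end Projection

theorem gradient_estimate_hpr_general
    (E' : H → H)
    (C : Set H) (hCcv : Convex ℝ C)
    (P : H → H)
    (hP : ∀ v : H, P v ∈ C ∧ ∀ z ∈ C, ‖v - P v‖ ≤ ‖v - z‖)
    (hHPR : ∀ u ∈ C, ∀ v : H, u + P v - v ∈ C)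
    (u u' : ℝ → H) (u₀ : H) (hu : IsOGF C E' u u' u₀) :
    ∀ᵐ t ∂(volume.restrict (Ioi (0:ℝ))),
      Metric.infDist (E' (u t)) C ≤ Metric.infDist (-u' t) C := by
  filter_upwards [hu.fvi, ae_restrict_mem measurableSet_Ioi] with t hfvi ht
  exact infDist_le_infDist_neg_of_variational_ineq hCcv hP hHPR (hu.mem t (le_of_lt ht)) hfvi

/-- **A gradient estimate.** If `C` has the Half Plane Residuum property, then along an
Obstacle Gradient Flow one has `dist(∇E(u(t)), C) ≤ dist(-u̇(t), C)` for a.e. `t > 0`. -/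
theorem gradient_estimate_hpr
    (E : H → ℝ) (E' : H → H) (α : ℝ) (hE : Assumption1 E E' α)
    (C : Set H) (hCne : C.Nonempty) (hCcl : IsClosed C) (hCcv : Convex ℝ C)
    (P : H → H)
    (hP : ∀ v : H, P v ∈ C ∧ ∀ z ∈ C, ‖v - P v‖ ≤ ‖v - z‖)
    (hHPR : ∀ u ∈ C, ∀ v : H, u + P v - v ∈ C)
    (u u' : ℝ → H) (u₀ : H) (hu₀ : u₀ ∈ C) (hu : IsOGF C E' u u' u₀) :
    ∀ᵐ t ∂(volume.restrict (Ioi (0:ℝ))),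
      Metric.infDist (E' (u t)) C ≤ Metric.infDist (-u' t) C :=
  gradient_estimate_hpr_general E' C hCcv P hP hHPR u u' u₀ hu
end
end

section
/- Let u₀ ∈ C, τ ∈ (0,1), and let (u_{kτ})_{k≥0} be a minimizing movement sequence starting at u₀ with piecewise linear interpolation u^τ. Then for all t, s ≥ 0 one has ‖u^τ(t) − u^τ(s)‖ ≤ 3√2 · √(E(u₀) − α) · √|t − s|. -/
open MeasureTheory Set Filter

noncomputable section

local notation "⟪" x ", " y "⟫" => @inner ℝ _ _ x y

variable {H : Type*} [NormedAddCommGroup H] [InnerProductSpace ℝ H] [CompleteSpace H]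

/-- A minimizing movement sequence with stepwidth `τ` starting at `u₀ ∈ C`: each
`us (k+1)` minimizes `Φ_{us k, τ}` over `C`. -/
def IsMinMovSeq (E : H → ℝ) (C : Set H) (τ : ℝ) (us : ℕ → H) (u₀ : H) : Prop :=
  us 0 = u₀ ∧ ∀ k : ℕ, us (k + 1) ∈ C ∧
    ∀ z ∈ C, ‖us (k + 1) - us k‖ ^ 2 / (2 * τ) + E (us (k + 1)) ≤
      ‖z - us k‖ ^ 2 / (2 * τ) + E z

/-- The piecewise linear interpolation `u^τ` of a minimizing movement sequence:
on `[kτ, (k+1)τ)` it interpolates linearly between `us k` and `us (k+1)`. -/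
noncomputable def pwlInterp (τ : ℝ) (us : ℕ → H) (t : ℝ) : H :=
  (1 - (t - (⌊t / τ⌋₊ : ℝ) * τ) / τ) • us ⌊t / τ⌋₊ +
    ((t - (⌊t / τ⌋₊ : ℝ) * τ) / τ) • us (⌊t / τ⌋₊ + 1)

/-! Testing the minimality of `u_{k+1}` against the competitor `u_k` gives
`‖u_{k+1} - u_k‖² ≤ 2τ (E(u_k) - E(u_{k+1}))`. Summing, the energy telescopes and is bounded
below by `α`, so Cauchy–Schwarz yields the discrete ½-Hölder bound
`‖u_n - u_m‖ ≤ √(2 (E(u₀) - α)) · √((n - m) τ)`. For the interpolation, `u^τ(t) - u^τ(s)` splits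
into a partial segment at `t`, a grid increment and a partial segment at `s`; each of the three
is bounded by `√(2 (E(u₀) - α)) · √|t - s|`. -/

lemma norm_sub_le_sqrt_of_sum_sq_norm_succ_sub_le {G : Type*} [SeminormedAddCommGroup G]
    {x : ℕ → G} {m n : ℕ} (hmn : m ≤ n) {B : ℝ}
    (hB : ∑ k ∈ Finset.Ico m n, ‖x (k + 1) - x k‖ ^ 2 ≤ B) :
    ‖x n - x m‖ ≤ √(((n : ℝ) - m) * B) := by
  refine Real.le_sqrt_of_sq_le ?_
  have hcard : ((Finset.Ico m n).card : ℝ) = (n : ℝ) - m := by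
    rw [Nat.card_Ico, Nat.cast_sub hmn]
  calc ‖x n - x m‖ ^ 2 = ‖∑ k ∈ Finset.Ico m n, (x (k + 1) - x k)‖ ^ 2 := by
        rw [Finset.sum_Ico_sub x hmn]
    _ ≤ (∑ k ∈ Finset.Ico m n, ‖x (k + 1) - x k‖) ^ 2 := by gcongr; exact norm_sum_le _ _
    _ ≤ (Finset.Ico m n).card * ∑ k ∈ Finset.Ico m n, ‖x (k + 1) - x k‖ ^ 2 :=
        sq_sum_le_card_mul_sum_sq
    _ ≤ ((n : ℝ) - m) * B := by
        rw [hcard]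
        exact mul_le_mul_of_nonneg_left hB (sub_nonneg.2 (Nat.cast_le.2 hmn))

lemma norm_succ_sub_le_of_norm_sub_le {G : Type*} [SeminormedAddCommGroup G] {x : ℕ → G}
    {τ L : ℝ} (hx : ∀ m n : ℕ, m ≤ n → ‖x n - x m‖ ≤ L * √(((n : ℝ) - m) * τ)) (k : ℕ) :
    ‖x (k + 1) - x k‖ ≤ L * √τ := by
  simpa using hx k (k + 1) k.le_succ

namespace IsMinMovSeq

variable {V : Type*} [NormedAddCommGroup V] {E : V → ℝ} {C : Set V} {τ : ℝ} {us : ℕ → V} {u₀ : V}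

lemma mem (hus : IsMinMovSeq E C τ us u₀) (hu₀ : u₀ ∈ C) : ∀ k, us k ∈ C
  | 0 => hus.1 ▸ hu₀
  | k + 1 => (hus.2 k).1

lemma sq_norm_succ_sub_le (hus : IsMinMovSeq E C τ us u₀) (hu₀ : u₀ ∈ C) (hτ : 0 < τ)
    (k : ℕ) : ‖us (k + 1) - us k‖ ^ 2 ≤ 2 * τ * (E (us k) - E (us (k + 1))) := by
  have h := (hus.2 k).2 (us k) (hus.mem hu₀ k)
  rw [sub_self, norm_zero, zero_pow two_ne_zero, zero_div, zero_add] at h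
  exact (div_le_iff₀' (by positivity)).1 (le_sub_iff_add_le.2 h)

lemma antitone_energy (hus : IsMinMovSeq E C τ us u₀) (hu₀ : u₀ ∈ C) (hτ : 0 < τ) :
    Antitone fun k => E (us k) :=
  antitone_nat_of_succ_le fun k => sub_nonneg.1 <|
    nonneg_of_mul_nonneg_right ((sq_nonneg _).trans (hus.sq_norm_succ_sub_le hu₀ hτ k))
      (by positivity)

lemma sum_sq_norm_succ_sub_le (hus : IsMinMovSeq E C τ us u₀) (hu₀ : u₀ ∈ C) (hτ : 0 < τ)
    {α : ℝ} (hα : ∀ u, α ≤ E u) {m n : ℕ} (hmn : m ≤ n) :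
    ∑ k ∈ Finset.Ico m n, ‖us (k + 1) - us k‖ ^ 2 ≤ 2 * τ * (E u₀ - α) :=
  calc ∑ k ∈ Finset.Ico m n, ‖us (k + 1) - us k‖ ^ 2
      ≤ ∑ k ∈ Finset.Ico m n, 2 * τ * (E (us k) - E (us (k + 1))) :=
        Finset.sum_le_sum fun k _ => hus.sq_norm_succ_sub_le hu₀ hτ k
    _ = 2 * τ * (E (us m) - E (us n)) := by
        rw [← Finset.mul_sum, ← neg_sub (E (us n)), ← Finset.sum_Ico_sub (fun k => E (us k)) hmn,
          ← Finset.sum_neg_distrib]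
        simp only [neg_sub]
    _ ≤ 2 * τ * (E u₀ - α) := by
        gcongr
        · exact hus.1 ▸ hus.antitone_energy hu₀ hτ (Nat.zero_le m)
        · exact hα _

lemma norm_sub_le (hus : IsMinMovSeq E C τ us u₀) (hu₀ : u₀ ∈ C) (hτ : 0 < τ)
    {α : ℝ} (hα : ∀ u, α ≤ E u) (m n : ℕ) (hmn : m ≤ n) :
    ‖us n - us m‖ ≤ √(2 * (E u₀ - α)) * √(((n : ℝ) - m) * τ) := by
  refine (norm_sub_le_sqrt_of_sum_sq_norm_succ_sub_le hmn
    (hus.sum_sq_norm_succ_sub_le hu₀ hτ hα hmn)).trans_eq ?_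
  rw [← Real.sqrt_mul (by linarith [hα u₀])]
  ring_nf

end IsMinMovSeq

lemma div_mul_sqrt_le_sqrt {a τ : ℝ} (hτ : 0 < τ) (ha : 0 ≤ a) (haτ : a ≤ τ) :
    a / τ * √τ ≤ √a :=
  calc a / τ * √τ = √(a / τ) * (√(a / τ) * √τ) := by
        rw [← mul_assoc, Real.mul_self_sqrt (by positivity)]
    _ = √(a / τ) * √a := by rw [← Real.sqrt_mul (by positivity), div_mul_cancel₀ _ hτ.ne']
    _ ≤ √a := mul_le_of_le_one_left (Real.sqrt_nonneg _)
        (Real.sqrt_le_one.2 ((div_le_one hτ).2 haτ))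

lemma norm_div_smul_le_mul_sqrt {G : Type*} [SeminormedAddCommGroup G] [NormedSpace ℝ G]
    {a τ L : ℝ} {v : G} (hτ : 0 < τ) (ha : 0 ≤ a) (haτ : a ≤ τ) (hv : ‖v‖ ≤ L * √τ) :
    ‖(a / τ) • v‖ ≤ L * √a := by
  have hL : 0 ≤ L := nonneg_of_mul_nonneg_left ((norm_nonneg v).trans hv) (Real.sqrt_pos.2 hτ)
  rw [norm_smul, Real.norm_of_nonneg (by positivity)]
  calc a / τ * ‖v‖ ≤ a / τ * (L * √τ) := by gcongr
    _ = L * (a / τ * √τ) := by ring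
    _ ≤ L * √a := by gcongr; exact div_mul_sqrt_le_sqrt hτ ha haτ

lemma floor_div_mul_le {r τ : ℝ} (hr : 0 ≤ r) (hτ : 0 < τ) : (⌊r / τ⌋₊ : ℝ) * τ ≤ r :=
  (le_div_iff₀ hτ).1 (Nat.floor_le (by positivity))

lemma lt_floor_div_add_one_mul (r : ℝ) {τ : ℝ} (hτ : 0 < τ) : r < ((⌊r / τ⌋₊ : ℝ) + 1) * τ :=
  (div_lt_iff₀ hτ).1 (Nat.lt_floor_add_one _)

section Interpolation

variable {V : Type*} [NormedAddCommGroup V] [InnerProductSpace ℝ V] {τ L : ℝ} {x : ℕ → V}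

lemma pwlInterp_sub_floor (τ : ℝ) (x : ℕ → V) (r : ℝ) :
    pwlInterp τ x r - x ⌊r / τ⌋₊ =
      ((r - (⌊r / τ⌋₊ : ℝ) * τ) / τ) • (x (⌊r / τ⌋₊ + 1) - x ⌊r / τ⌋₊) := by
  unfold pwlInterp
  module

lemma pwlInterp_sub_floor_succ (hτ : τ ≠ 0) (x : ℕ → V) (r : ℝ) :
    pwlInterp τ x r - x (⌊r / τ⌋₊ + 1) =
      ((((⌊r / τ⌋₊ : ℝ) + 1) * τ - r) / τ) • (x ⌊r / τ⌋₊ - x (⌊r / τ⌋₊ + 1)) := by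
  unfold pwlInterp
  match_scalars <;> field_simp <;> ring

lemma norm_pwlInterp_sub_floor_le (hτ : 0 < τ) (hstep : ∀ k, ‖x (k + 1) - x k‖ ≤ L * √τ)
    {r : ℝ} (hr : 0 ≤ r) :
    ‖pwlInterp τ x r - x ⌊r / τ⌋₊‖ ≤ L * √(r - (⌊r / τ⌋₊ : ℝ) * τ) := by
  have hlo := floor_div_mul_le hr hτ
  have hhi := lt_floor_div_add_one_mul r hτ
  rw [pwlInterp_sub_floor]
  exact norm_div_smul_le_mul_sqrt hτ (by linarith) (by linarith) (hstep _)

lemma norm_pwlInterp_sub_floor_succ_le (hτ : 0 < τ)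
    (hstep : ∀ k, ‖x (k + 1) - x k‖ ≤ L * √τ) {r : ℝ} (hr : 0 ≤ r) :
    ‖pwlInterp τ x r - x (⌊r / τ⌋₊ + 1)‖ ≤ L * √(((⌊r / τ⌋₊ : ℝ) + 1) * τ - r) := by
  have hlo := floor_div_mul_le hr hτ
  have hhi := lt_floor_div_add_one_mul r hτ
  rw [pwlInterp_sub_floor_succ hτ.ne', ← neg_sub (x (⌊r / τ⌋₊ + 1)), smul_neg, norm_neg]
  exact norm_div_smul_le_mul_sqrt hτ (by linarith) (by linarith) (hstep _)

lemma norm_pwlInterp_sub_le_of_floor_eq (hτ : 0 < τ)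
    (hstep : ∀ k, ‖x (k + 1) - x k‖ ≤ L * √τ) {s t : ℝ} (hs : 0 ≤ s) (hst : s ≤ t)
    (hfloor : ⌊s / τ⌋₊ = ⌊t / τ⌋₊) :
    ‖pwlInterp τ x t - pwlInterp τ x s‖ ≤ L * √(t - s) := by
  have hlo := floor_div_mul_le hs hτ
  have hhi := lt_floor_div_add_one_mul t hτ
  rw [← sub_sub_sub_cancel_right _ _ (x ⌊t / τ⌋₊), pwlInterp_sub_floor, ← hfloor,
    pwlInterp_sub_floor, ← sub_smul, ← sub_div, sub_sub_sub_cancel_right]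
  rw [← hfloor] at hhi
  exact norm_div_smul_le_mul_sqrt hτ (by linarith) (by linarith) (hstep _)

lemma norm_pwlInterp_sub_le_of_floor_lt (hτ : 0 < τ) (hL : 0 ≤ L)
    (hx : ∀ m n : ℕ, m ≤ n → ‖x n - x m‖ ≤ L * √(((n : ℝ) - m) * τ)) {s t : ℝ} (hs : 0 ≤ s)
    (hst : s ≤ t) (hfloor : ⌊s / τ⌋₊ < ⌊t / τ⌋₊) :
    ‖pwlInterp τ x t - pwlInterp τ x s‖ ≤ 3 * L * √(t - s) := by
  have hstep := norm_succ_sub_le_of_norm_sub_le hx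
  have hs_hi := lt_floor_div_add_one_mul s hτ
  have ht_lo := floor_div_mul_le (hs.trans hst) hτ
  have hgrid : ((⌊s / τ⌋₊ : ℝ) + 1) * τ ≤ ⌊t / τ⌋₊ * τ := by gcongr; exact_mod_cast hfloor
  calc ‖pwlInterp τ x t - pwlInterp τ x s‖
      = ‖(pwlInterp τ x t - x ⌊t / τ⌋₊) + (x ⌊t / τ⌋₊ - x (⌊s / τ⌋₊ + 1))
          - (pwlInterp τ x s - x (⌊s / τ⌋₊ + 1))‖ := by congr 1; abel
    _ ≤ ‖pwlInterp τ x t - x ⌊t / τ⌋₊‖ + ‖x ⌊t / τ⌋₊ - x (⌊s / τ⌋₊ + 1)‖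
          + ‖pwlInterp τ x s - x (⌊s / τ⌋₊ + 1)‖ := norm_sub_le_of_le (norm_add_le _ _) le_rfl
    _ ≤ L * √(t - s) + L * √(t - s) + L * √(t - s) := by
        refine add_le_add_three ((norm_pwlInterp_sub_floor_le hτ hstep (hs.trans hst)).trans ?_)
          ((hx _ _ hfloor).trans ?_) ((norm_pwlInterp_sub_floor_succ_le hτ hstep hs).trans ?_)
        all_goals gcongr
        all_goals push_cast
        all_goals linarith
    _ = 3 * L * √(t - s) := by ring

lemma norm_pwlInterp_sub_le (hτ : 0 < τ) (hL : 0 ≤ L)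
    (hx : ∀ m n : ℕ, m ≤ n → ‖x n - x m‖ ≤ L * √(((n : ℝ) - m) * τ)) {t s : ℝ} (ht : 0 ≤ t)
    (hs : 0 ≤ s) : ‖pwlInterp τ x t - pwlInterp τ x s‖ ≤ 3 * L * √|t - s| := by
  wlog hst : s ≤ t generalizing s t
  · rw [norm_sub_rev, abs_sub_comm]
    exact this hs ht (le_of_not_ge hst)
  rw [abs_of_nonneg (sub_nonneg.2 hst)]
  rcases (Nat.floor_le_floor (div_le_div_of_nonneg_right hst hτ.le)).eq_or_lt with heq | hlt
  · have hbound := norm_pwlInterp_sub_le_of_floor_eq hτ (norm_succ_sub_le_of_norm_sub_le hx)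
      hs hst heq
    linarith [mul_nonneg hL (Real.sqrt_nonneg (t - s))]
  · exact norm_pwlInterp_sub_le_of_floor_lt hτ hL hx hs hst hlt

end Interpolation

theorem uniform_hoelder_bound_general
    (E : H → ℝ) (E' : H → H) (α : ℝ) (hE : Assumption1 E E' α)
    (C : Set H)
    (u₀ : H) (hu₀ : u₀ ∈ C) (τ : ℝ) (hτ : τ ∈ Ioo (0:ℝ) 1)
    (us : ℕ → H) (hus : IsMinMovSeq E C τ us u₀) :
    ∀ t s : ℝ, 0 ≤ t → 0 ≤ s →
      ‖pwlInterp τ us t - pwlInterp τ us s‖ ≤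
        3 * Real.sqrt 2 * Real.sqrt (E u₀ - α) * Real.sqrt |t - s| := by
  intro t s ht hs
  have hbound := norm_pwlInterp_sub_le hτ.1 (Real.sqrt_nonneg _)
    (hus.norm_sub_le hu₀ hτ.1 hE.lowerBound) ht hs
  rwa [Real.sqrt_mul zero_le_two, ← mul_assoc] at hbound

/-- **Uniform Hölder bound.** For each stepwidth `τ ∈ (0,1)` the piecewise linear
interpolation of a minimizing movement sequence satisfies
`‖u^τ(t) - u^τ(s)‖ ≤ 3√2 · √(E(u₀) - α) · √|t - s|` for all `t, s ≥ 0`. -/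
theorem uniform_hoelder_bound
    (E : H → ℝ) (E' : H → H) (α : ℝ) (hE : Assumption1 E E' α)
    (C : Set H) (hCne : C.Nonempty) (hCcl : IsClosed C) (hCcv : Convex ℝ C)
    (u₀ : H) (hu₀ : u₀ ∈ C) (τ : ℝ) (hτ : τ ∈ Ioo (0:ℝ) 1)
    (us : ℕ → H) (hus : IsMinMovSeq E C τ us u₀) :
    ∀ t s : ℝ, 0 ≤ t → 0 ≤ s →
      ‖pwlInterp τ us t - pwlInterp τ us s‖ ≤
        3 * Real.sqrt 2 * Real.sqrt (E u₀ - α) * Real.sqrt |t - s| :=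
  uniform_hoelder_bound_general E E' α hE C u₀ hu₀ τ hτ us hus
end
end

section
/- The obstacle set C := { u ∈ H : u ≥ ψ a.e. } is a convex, closed subset of H that has the Half Plane Residuum (HPR) property, i.e. for every u ∈ C and every v ∈ H one has u + π_C(v) − v ∈ C, where π_C denotes the nearest point projection onto C in H. (In fact, v − π_C(v) ≤ 0 almost everywhere for every v ∈ H.) -/
open MeasureTheory Set Filter Topology

noncomputable section

/-- Membership in `H = W^{2,2}(0,1) ∩ W₀^{1,2}(0,1)`: `u1` is the (continuous) derivative of
`u` on `[0,1]`, `u1` is absolutely continuous with (integrable) derivative `u2 ∈ L²(0,1)`,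
and `u(0) = u(1) = 0`. -/
def MemH (u u1 u2 : ℝ → ℝ) : Prop :=
  (∀ x ∈ Icc (0:ℝ) 1, HasDerivWithinAt u (u1 x) (Icc 0 1) x) ∧
  (∀ x ∈ Icc (0:ℝ) 1, u1 x = u1 0 + ∫ t in (0:ℝ)..x, u2 t) ∧
  IntegrableOn u2 (Icc (0:ℝ) 1) ∧
  IntegrableOn (fun x => (u2 x) ^ 2) (Icc (0:ℝ) 1) ∧
  u 0 = 0 ∧ u 1 = 0

/-- Membership in the obstacle set `C = { u ∈ H : u ≥ ψ a.e. }`. -/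
def MemC (ψ : ℝ → ℝ) (u u1 u2 : ℝ → ℝ) : Prop :=
  MemH u u1 u2 ∧ ∀ᵐ x ∂(volume.restrict (Icc (0:ℝ) 1)), ψ x ≤ u x

/-- The inner product of `H`: `(u,v) = ∫₀¹ u'' v''` (in terms of the second derivatives). -/
def Hip (u2 v2 : ℝ → ℝ) : ℝ := ∫ x in (0:ℝ)..1, u2 x * v2 x

/-- The norm of `H`: `‖u‖ = (∫₀¹ (u'')²)^{1/2}` (in terms of the second derivative). -/
def Hnorm (u2 : ℝ → ℝ) : ℝ := Real.sqrt (∫ x in (0:ℝ)..1, (u2 x) ^ 2)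

/-!
On `H` the sup norm is controlled by the `H`-norm: `u'` vanishes somewhere by Rolle, so
`|u x| ≤ ∫₀¹ |u''| ≤ ‖u‖` by Cauchy–Schwarz. Hence convergence in `H` implies pointwise
convergence, which preserves `u ≥ ψ`.

For the HPR property, `p + t h ∈ C` for every `t > 0` and every `h ∈ H` with `h ≥ 0`, so the
nearest point `p` satisfies the variational inequality `∫ (v'' - p'') h'' ≤ 0`. Testing with
`h'' = -1_(a,b]`, whose solution with zero boundary values is concave and hence nonnegative,
gives `∫ₐᵇ (p'' - v'') ≤ 0`. So `(p - v)'` is antitone, and the concave function `p - v`,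
which vanishes at `0` and `1`, is nonnegative.
-/

lemma sq_integral_le_integral_sq {Ω : Type*} [MeasurableSpace Ω] {μ : Measure Ω}
    [IsProbabilityMeasure μ] {f : Ω → ℝ} (hf : MemLp f 2 μ) :
    (∫ x, f x ∂μ) ^ 2 ≤ ∫ x, f x ^ 2 ∂μ := by
  have h := ProbabilityTheory.variance_nonneg f μ
  rw [ProbabilityTheory.variance_eq_sub hf] at h
  simpa [sub_nonneg] using h

lemma integral_sub_mul_sq {Ω : Type*} [MeasurableSpace Ω] {μ : Measure Ω} {f g : Ω → ℝ}
    (hf : MemLp f 2 μ) (hg : MemLp g 2 μ) (t : ℝ) :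
    ∫ x, (f x - t * g x) ^ 2 ∂μ
      = ∫ x, f x ^ 2 ∂μ - 2 * t * ∫ x, f x * g x ∂μ + t ^ 2 * ∫ x, g x ^ 2 ∂μ := by
  have hfg : Integrable (fun x => 2 * t * (f x * g x)) μ := (hf.integrable_mul hg).const_mul _
  have hf2 : Integrable (fun x => f x ^ 2 - 2 * t * (f x * g x)) μ := hf.integrable_sq.sub hfg
  calc ∫ x, (f x - t * g x) ^ 2 ∂μ
      = ∫ x, (f x ^ 2 - 2 * t * (f x * g x) + t ^ 2 * g x ^ 2) ∂μ :=
        integral_congr_ae (ae_of_all _ fun x => by ring)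
    _ = _ := by
      rw [integral_add hf2 (hg.integrable_sq.const_mul _), integral_sub hf.integrable_sq hfg,
        integral_const_mul, integral_const_mul]

lemma nonpos_of_forall_pos_two_mul_le {b c : ℝ} (h : ∀ t > 0, 2 * t * b ≤ t ^ 2 * c) :
    b ≤ 0 := by
  by_contra! hb
  have hc : c < |c| + 1 := by linarith [le_abs_self c]
  have key := h (b / (|c| + 1)) (by positivity)
  have : b / (|c| + 1) * c < b := by
    rw [div_mul_eq_mul_div, div_lt_iff₀ (by positivity)]
    exact mul_lt_mul_of_pos_left hc hb
  nlinarith [div_pos hb (show 0 < |c| + 1 by positivity)]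

lemma intervalIntegral_zero_one_eq (f : ℝ → ℝ) :
    ∫ x in (0:ℝ)..1, f x = ∫ x in Icc 0 1, f x := by
  rw [intervalIntegral.integral_of_le zero_le_one, integral_Icc_eq_integral_Ioc]

lemma Hnorm_eq (f : ℝ → ℝ) : Hnorm f = √(∫ x in Icc 0 1, f x ^ 2) := by
  rw [Hnorm, intervalIntegral_zero_one_eq]

lemma integral_abs_le_Hnorm {f : ℝ → ℝ} (hf : MemLp f 2 (volume.restrict (Icc 0 1))) :
    ∫ x in Icc 0 1, |f x| ≤ Hnorm f := by
  have : IsProbabilityMeasure (volume.restrict (Icc (0:ℝ) 1)) := ⟨by simp⟩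
  rw [Hnorm_eq]
  apply Real.le_sqrt_of_sq_le
  simpa only [Pi.abs_apply, sq_abs] using sq_integral_le_integral_sq hf.abs

lemma abs_intervalIntegral_le_setIntegral_abs {f : ℝ → ℝ} {a b : ℝ} {s : Set ℝ}
    (hs : uIoc a b ⊆ s) (hf : IntegrableOn f s) :
    |∫ x in a..b, f x| ≤ ∫ x in s, |f x| := by
  rw [← Real.norm_eq_abs, intervalIntegral.norm_integral_eq_norm_integral_uIoc]
  exact (norm_integral_le_integral_norm _).trans
    (setIntegral_mono_set hf.norm (ae_of_all _ fun _ => norm_nonneg _) hs.eventuallyLE)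

lemma setIntegral_mul_indicator_Ioc {f : ℝ → ℝ} {a b : ℝ} (ha : 0 ≤ a) (hab : a ≤ b)
    (hb : b ≤ 1) :
    ∫ x in Icc 0 1, f x * (Ioc a b).indicator 1 x = ∫ x in a..b, f x := by
  have hsub : Icc 0 1 ∩ Ioc a b = Ioc a b :=
    inter_eq_right.2 (Ioc_subset_Icc_self.trans (Icc_subset_Icc ha hb))
  simp_rw [← indicator_mul_right, Pi.one_apply, mul_one]
  rw [setIntegral_indicator measurableSet_Ioc, hsub, intervalIntegral.integral_of_le hab]

namespace MemH

variable {u u1 u2 v v1 v2 : ℝ → ℝ}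

lemma memLp_two (hu : MemH u u1 u2) : MemLp u2 2 (volume.restrict (Icc 0 1)) :=
  (memLp_two_iff_integrable_sq hu.2.2.1.aestronglyMeasurable).2 hu.2.2.2.1

lemma intervalIntegrable (hu : MemH u u1 u2) {a b : ℝ} (ha : a ∈ Icc (0:ℝ) 1)
    (hb : b ∈ Icc (0:ℝ) 1) : IntervalIntegrable u2 volume a b :=
  (hu.2.2.1.mono_set (uIcc_subset_Icc ha hb)).intervalIntegrable

lemma lincomb (a b : ℝ) (hu : MemH u u1 u2) (hv : MemH v v1 v2) :
    MemH (fun x => a * u x + b * v x) (fun x => a * u1 x + b * v1 x)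
      (fun x => a * u2 x + b * v2 x) := by
  have hL2 := ((hu.memLp_two.const_mul a).add (hv.memLp_two.const_mul b)).integrable_sq
  refine ⟨fun x hx => ((hu.1 x hx).const_mul a).add ((hv.1 x hx).const_mul b),
    fun x hx => ?_, (hu.2.2.1.const_mul a).add (hv.2.2.1.const_mul b), hL2,
    by simp [hu.2.2.2.2.1, hv.2.2.2.2.1], by simp [hu.2.2.2.2.2, hv.2.2.2.2.2]⟩
  have h0 : (0:ℝ) ∈ Icc (0:ℝ) 1 := left_mem_Icc.2 zero_le_one
  beta_reduce
  rw [intervalIntegral.integral_add ((hu.intervalIntegrable h0 hx).const_mul a)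
    ((hv.intervalIntegrable h0 hx).const_mul b), intervalIntegral.integral_const_mul,
    intervalIntegral.integral_const_mul, hu.2.1 x hx, hv.2.1 x hx]
  ring

lemma add (hu : MemH u u1 u2) (hv : MemH v v1 v2) :
    MemH (fun x => u x + v x) (fun x => u1 x + v1 x) (fun x => u2 x + v2 x) := by
  simpa using lincomb 1 1 hu hv

lemma sub (hu : MemH u u1 u2) (hv : MemH v v1 v2) :
    MemH (fun x => u x - v x) (fun x => u1 x - v1 x) (fun x => u2 x - v2 x) := by
  simpa [← sub_eq_add_neg] using lincomb 1 (-1) hu hv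

lemma hasDerivAt (hu : MemH u u1 u2) {x : ℝ} (hx : x ∈ Ioo (0:ℝ) 1) : HasDerivAt u (u1 x) x :=
  (hu.1 x (Ioo_subset_Icc_self hx)).hasDerivAt (Icc_mem_nhds hx.1 hx.2)

lemma continuousOn (hu : MemH u u1 u2) : ContinuousOn u (Icc 0 1) :=
  fun x hx => (hu.1 x hx).continuousWithinAt

lemma continuousOn_deriv (hu : MemH u u1 u2) : ContinuousOn u1 (Icc 0 1) := by
  have hprim := intervalIntegral.continuousOn_primitive_interval (a := 0) (b := 1)
    (μ := volume) (f := u2) (by rw [uIcc_of_le zero_le_one]; exact hu.2.2.1)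
  rw [uIcc_of_le zero_le_one] at hprim
  exact (continuousOn_const.add hprim).congr hu.2.1

lemma deriv_sub_deriv (hu : MemH u u1 u2) {a b : ℝ} (ha : a ∈ Icc (0:ℝ) 1)
    (hb : b ∈ Icc (0:ℝ) 1) : u1 b - u1 a = ∫ x in a..b, u2 x := by
  have h0 : (0:ℝ) ∈ Icc (0:ℝ) 1 := left_mem_Icc.2 zero_le_one
  rw [hu.2.1 a ha, hu.2.1 b hb, add_sub_add_left_eq_sub,
    intervalIntegral.integral_interval_sub_left (hu.intervalIntegrable h0 hb)
      (hu.intervalIntegrable h0 ha)]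

lemma eq_integral_deriv (hu : MemH u u1 u2) {x : ℝ} (hx : x ∈ Icc (0:ℝ) 1) :
    u x = ∫ t in (0:ℝ)..x, u1 t := by
  have hsub : Icc 0 x ⊆ Icc (0:ℝ) 1 := Icc_subset_Icc le_rfl hx.2
  rw [intervalIntegral.integral_eq_sub_of_hasDerivAt_of_le hx.1 (hu.continuousOn.mono hsub)
    (fun t ht => hu.hasDerivAt ⟨ht.1, ht.2.trans_le hx.2⟩)
    ((hu.continuousOn_deriv.mono hsub).intervalIntegrable_of_Icc hx.1), hu.2.2.2.2.1, sub_zero]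

lemma exists_deriv_eq_zero (hu : MemH u u1 u2) : ∃ ξ ∈ Icc (0:ℝ) 1, u1 ξ = 0 := by
  obtain ⟨ξ, hξ, h⟩ := exists_hasDerivAt_eq_zero zero_lt_one hu.continuousOn
    (hu.2.2.2.2.1.trans hu.2.2.2.2.2.symm) fun x hx => hu.hasDerivAt hx
  exact ⟨ξ, Ioo_subset_Icc_self hξ, h⟩

lemma abs_deriv_le (hu : MemH u u1 u2) {x : ℝ} (hx : x ∈ Icc (0:ℝ) 1) :
    |u1 x| ≤ ∫ t in Icc 0 1, |u2 t| := by
  obtain ⟨ξ, hξ, hξ0⟩ := hu.exists_deriv_eq_zero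
  have hdiff := hu.deriv_sub_deriv hξ hx
  rw [hξ0, sub_zero] at hdiff
  rw [hdiff]
  exact abs_intervalIntegral_le_setIntegral_abs
    (uIoc_subset_uIcc.trans (uIcc_subset_Icc hξ hx)) hu.2.2.1

lemma abs_le_Hnorm (hu : MemH u u1 u2) {x : ℝ} (hx : x ∈ Icc (0:ℝ) 1) : |u x| ≤ Hnorm u2 := by
  calc |u x| = ‖∫ t in (0:ℝ)..x, u1 t‖ := by rw [hu.eq_integral_deriv hx, Real.norm_eq_abs]
    _ ≤ (∫ t in Icc 0 1, |u2 t|) * |x - 0| :=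
      intervalIntegral.norm_integral_le_of_norm_le_const fun t ht =>
        hu.abs_deriv_le (uIoc_subset_uIcc.trans (uIcc_subset_Icc ⟨le_rfl, zero_le_one⟩ hx) ht)
    _ ≤ ∫ t in Icc 0 1, |u2 t| := by
      rw [sub_zero, abs_of_nonneg hx.1]
      exact mul_le_of_le_one_right (integral_nonneg fun _ => abs_nonneg _) hx.2
    _ ≤ Hnorm u2 := integral_abs_le_Hnorm hu.memLp_two

lemma nonneg_of_integral_nonpos (hu : MemH u u1 u2)
    (h : ∀ a b, 0 ≤ a → a ≤ b → b ≤ 1 → ∫ x in a..b, u2 x ≤ 0) :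
    ∀ x ∈ Icc (0:ℝ) 1, 0 ≤ u x := by
  have hanti : AntitoneOn u1 (Icc 0 1) := fun a ha b hb hab => by
    linarith [hu.deriv_sub_deriv ha hb, h a b ha.1 hab hb.2]
  have hconc : ConcaveOn ℝ (Icc 0 1) u := by
    refine AntitoneOn.concaveOn_of_deriv (convex_Icc 0 1) hu.continuousOn ?_ ?_ <;>
      rw [interior_Icc]
    · exact fun x hx => (hu.hasDerivAt hx).differentiableAt.differentiableWithinAt
    · intro a ha b hb hab
      rw [(hu.hasDerivAt ha).deriv, (hu.hasDerivAt hb).deriv]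
      exact hanti (Ioo_subset_Icc_self ha) (Ioo_subset_Icc_self hb) hab
  intro x hx
  simpa [hu.2.2.2.2.1, hu.2.2.2.2.2] using
    hconc.min_le_of_mem_Icc (left_mem_Icc.2 zero_le_one) (right_mem_Icc.2 zero_le_one) hx

end MemH

lemma exists_memH {g : ℝ → ℝ} (hg : Integrable g)
    (hg2 : IntegrableOn (fun x => g x ^ 2) (Icc 0 1)) : ∃ h h1 : ℝ → ℝ, MemH h h1 g := by
  set F : ℝ → ℝ := fun t => ∫ s in (0:ℝ)..t, g s
  have hF : Continuous F :=
    intervalIntegral.continuous_primitive (fun _ _ => hg.intervalIntegrable) 0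
  set c : ℝ := ∫ t in (0:ℝ)..1, F t
  have hderiv (x : ℝ) : HasDerivAt (fun y => (∫ t in (0:ℝ)..y, F t) - c * y) (F x - c) x :=
    ((hF.integral_hasStrictDerivAt 0 x).hasDerivAt.sub
      ((hasDerivAt_id' x).const_mul c)).congr_deriv (by ring)
  refine ⟨fun y => (∫ t in (0:ℝ)..y, F t) - c * y, fun y => F y - c,
    ⟨fun x _ => (hderiv x).hasDerivWithinAt, fun x _ => ?_, hg.integrableOn, hg2, by simp,
      by simp [c]⟩⟩
  simp only [F, intervalIntegral.integral_same]
  ring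

lemma exists_nonneg_memH_neg_indicator (a b : ℝ) :
    ∃ h h1 : ℝ → ℝ, MemH h h1 (-(Ioc a b).indicator 1) ∧ ∀ x ∈ Icc (0:ℝ) 1, 0 ≤ h x := by
  have hind : Integrable ((Ioc a b).indicator (1 : ℝ → ℝ)) :=
    (integrable_indicator_iff measurableSet_Ioc).2 (integrableOn_const measure_Ioc_lt_top.ne)
  have hsq : (fun x => (-(Ioc a b).indicator (1 : ℝ → ℝ)) x ^ 2) = (Ioc a b).indicator 1 := by
    ext x
    by_cases hx : x ∈ Ioc a b <;> simp [hx]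
  obtain ⟨h, h1, hh⟩ := exists_memH hind.neg (by rw [hsq]; exact hind.integrableOn)
  refine ⟨h, h1, hh, hh.nonneg_of_integral_nonpos fun _ _ _ hab _ => ?_⟩
  simp only [Pi.neg_apply, intervalIntegral.integral_neg, neg_nonpos]
  exact intervalIntegral.integral_nonneg hab fun x _ => indicator_nonneg (fun _ _ => zero_le_one) x

def IsNearestInC (ψ v2 p2 : ℝ → ℝ) : Prop :=
  ∀ z z1 z2 : ℝ → ℝ, MemC ψ z z1 z2 → Hnorm (fun x => v2 x - p2 x) ≤ Hnorm (fun x => v2 x - z2 x)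

namespace MemC

variable {ψ u u1 u2 v v1 v2 p p1 p2 : ℝ → ℝ}

lemma convex_comb {a b : ℝ} (ha : 0 ≤ a) (hb : 0 ≤ b) (hab : a + b = 1) (hu : MemC ψ u u1 u2)
    (hv : MemC ψ v v1 v2) :
    MemC ψ (fun x => a * u x + b * v x) (fun x => a * u1 x + b * v1 x)
      (fun x => a * u2 x + b * v2 x) := by
  refine ⟨hu.1.lincomb a b hv.1, ?_⟩
  filter_upwards [hu.2, hv.2] with x hux hvx
  calc ψ x = a * ψ x + b * ψ x := by rw [← add_mul, hab, one_mul]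
    _ ≤ a * u x + b * v x := by gcongr

lemma of_tendsto_Hnorm {un un1 un2 : ℕ → ℝ → ℝ} (hn : ∀ n, MemC ψ (un n) (un1 n) (un2 n))
    (hu : MemH u u1 u2)
    (hlim : Tendsto (fun n => Hnorm (fun x => un2 n x - u2 x)) atTop (𝓝 0)) :
    MemC ψ u u1 u2 := by
  refine ⟨hu, ?_⟩
  filter_upwards [ae_all_iff.2 fun n => (hn n).2, ae_restrict_mem measurableSet_Icc]
    with x hψx hx
  have hconv : Tendsto (fun n => un n x) atTop (𝓝 (u x)) := by
    rw [tendsto_iff_norm_sub_tendsto_zero]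
    exact squeeze_zero (fun _ => norm_nonneg _)
      (fun n => ((hn n).1.sub hu).abs_le_Hnorm hx) hlim
  exact ge_of_tendsto hconv (Eventually.of_forall hψx)

lemma integral_mul_nonpos_of_isNearestInC (hv : MemH v v1 v2) (hp : MemC ψ p p1 p2)
    (hmin : IsNearestInC ψ v2 p2) {h h1 h2 : ℝ → ℝ} (hh : MemH h h1 h2)
    (hh0 : ∀ x ∈ Icc (0:ℝ) 1, 0 ≤ h x) :
    ∫ x in Icc 0 1, (v2 x - p2 x) * h2 x ≤ 0 := by
  refine nonpos_of_forall_pos_two_mul_le (c := ∫ x in Icc 0 1, h2 x ^ 2) fun t ht => ?_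
  have hz : MemC ψ (fun x => 1 * p x + t * h x) (fun x => 1 * p1 x + t * h1 x)
      (fun x => 1 * p2 x + t * h2 x) := by
    refine ⟨hp.1.lincomb 1 t hh, ?_⟩
    filter_upwards [hp.2, ae_restrict_mem measurableSet_Icc] with x hψx hx
    nlinarith [hh0 x hx]
  have hle := hmin _ _ _ hz
  rw [Hnorm_eq, Hnorm_eq, Real.sqrt_le_sqrt_iff (integral_nonneg fun _ => sq_nonneg _)] at hle
  have hexp := integral_sub_mul_sq (hv.sub hp.1).memLp_two hh.memLp_two t
  simp only [one_mul, ← sub_sub] at hle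
  linarith

lemma integral_sub_nonpos_of_isNearestInC (hv : MemH v v1 v2) (hp : MemC ψ p p1 p2)
    (hmin : IsNearestInC ψ v2 p2) {a b : ℝ} (ha : 0 ≤ a) (hab : a ≤ b) (hb : b ≤ 1) :
    ∫ x in a..b, (p2 x - v2 x) ≤ 0 := by
  obtain ⟨h, h1, hh, hh0⟩ := exists_nonneg_memH_neg_indicator a b
  rw [← setIntegral_mul_indicator_Ioc ha hab hb]
  convert integral_mul_nonpos_of_isNearestInC hv hp hmin hh hh0 using 3 with x
  simp only [Pi.neg_apply]
  ring

lemma le_of_isNearestInC (hv : MemH v v1 v2) (hp : MemC ψ p p1 p2)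
    (hmin : IsNearestInC ψ v2 p2) {x : ℝ} (hx : x ∈ Icc (0:ℝ) 1) : v x ≤ p x :=
  sub_nonneg.1 <| (hp.1.sub hv).nonneg_of_integral_nonpos
    (fun _ _ ha hab hb => integral_sub_nonpos_of_isNearestInC hv hp hmin ha hab hb) x hx

lemma add_sub_of_isNearestInC (hu : MemC ψ u u1 u2) (hv : MemH v v1 v2) (hp : MemC ψ p p1 p2)
    (hmin : IsNearestInC ψ v2 p2) :
    MemC ψ (fun x => u x + p x - v x) (fun x => u1 x + p1 x - v1 x)
      (fun x => u2 x + p2 x - v2 x) := by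
  refine ⟨(hu.1.add hp.1).sub hv, ?_⟩
  filter_upwards [hu.2, ae_restrict_mem measurableSet_Icc] with x hux hx
  linarith [le_of_isNearestInC hv hp hmin hx]

end MemC

theorem obstacle_set_convex_closed_hpr_general
    (ψ : ℝ → ℝ) :
    -- convexity
    (∀ a b : ℝ, 0 ≤ a → 0 ≤ b → a + b = 1 →
      ∀ u u1 u2 v v1 v2 : ℝ → ℝ, MemC ψ u u1 u2 → MemC ψ v v1 v2 →
        MemC ψ (fun x => a * u x + b * v x) (fun x => a * u1 x + b * v1 x)
          (fun x => a * u2 x + b * v2 x)) ∧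
    -- (sequential) closedness in H
    (∀ (un un1 un2 : ℕ → ℝ → ℝ), (∀ n, MemC ψ (un n) (un1 n) (un2 n)) →
      ∀ u u1 u2 : ℝ → ℝ, MemH u u1 u2 →
        Filter.Tendsto (fun n => Hnorm (fun x => un2 n x - u2 x)) Filter.atTop (nhds 0) →
        MemC ψ u u1 u2) ∧
    -- HPR property: if p = π_C(v) is the nearest point projection of v onto C, then
    -- v - p ≤ 0 a.e., and u + p - v ∈ C for every u ∈ C.
    (∀ v v1 v2 : ℝ → ℝ, MemH v v1 v2 →
      ∀ p p1 p2 : ℝ → ℝ, MemC ψ p p1 p2 →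
        (∀ z z1 z2 : ℝ → ℝ, MemC ψ z z1 z2 →
          Hnorm (fun x => v2 x - p2 x) ≤ Hnorm (fun x => v2 x - z2 x)) →
        (∀ᵐ x ∂(volume.restrict (Icc (0:ℝ) 1)), v x - p x ≤ 0) ∧
        (∀ u u1 u2 : ℝ → ℝ, MemC ψ u u1 u2 →
          MemC ψ (fun x => u x + p x - v x) (fun x => u1 x + p1 x - v1 x)
            (fun x => u2 x + p2 x - v2 x))) := by
  refine ⟨fun a b ha hb hab _ _ _ _ _ _ hu hv => hu.convex_comb ha hb hab hv,
    fun _ _ _ hn _ _ _ hu hlim => MemC.of_tendsto_Hnorm hn hu hlim,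
    fun _ _ _ hv _ _ _ hp hmin => ⟨?_, fun _ _ _ hu => hu.add_sub_of_isNearestInC hv hp hmin⟩⟩
  filter_upwards [ae_restrict_mem measurableSet_Icc] with x hx
  exact sub_nonpos.2 (MemC.le_of_isNearestInC hv hp hmin hx)

/-- **The obstacle set is convex, closed, and has the HPR property.** For a continuous
obstacle `ψ` with `ψ(0), ψ(1) < 0`, the set `C = { u ∈ H : u ≥ ψ a.e. }` is convex,
(sequentially) closed in `H`, and for every `v ∈ H` the nearest point projection
`p = π_C(v)` satisfies `v - p ≤ 0` a.e.; in particular `u + π_C(v) - v ∈ C` for every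
`u ∈ C` (the Half Plane Residuum property). -/
theorem obstacle_set_convex_closed_hpr
    (ψ : ℝ → ℝ) (hψcont : ContinuousOn ψ (Icc 0 1)) (hψ0 : ψ 0 < 0) (hψ1 : ψ 1 < 0) :
    -- convexity
    (∀ a b : ℝ, 0 ≤ a → 0 ≤ b → a + b = 1 →
      ∀ u u1 u2 v v1 v2 : ℝ → ℝ, MemC ψ u u1 u2 → MemC ψ v v1 v2 →
        MemC ψ (fun x => a * u x + b * v x) (fun x => a * u1 x + b * v1 x)
          (fun x => a * u2 x + b * v2 x)) ∧
    -- (sequential) closedness in H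
    (∀ (un un1 un2 : ℕ → ℝ → ℝ), (∀ n, MemC ψ (un n) (un1 n) (un2 n)) →
      ∀ u u1 u2 : ℝ → ℝ, MemH u u1 u2 →
        Filter.Tendsto (fun n => Hnorm (fun x => un2 n x - u2 x)) Filter.atTop (nhds 0) →
        MemC ψ u u1 u2) ∧
    -- HPR property: if p = π_C(v) is the nearest point projection of v onto C, then
    -- v - p ≤ 0 a.e., and u + p - v ∈ C for every u ∈ C.
    (∀ v v1 v2 : ℝ → ℝ, MemH v v1 v2 →
      ∀ p p1 p2 : ℝ → ℝ, MemC ψ p p1 p2 →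
        (∀ z z1 z2 : ℝ → ℝ, MemC ψ z z1 z2 →
          Hnorm (fun x => v2 x - p2 x) ≤ Hnorm (fun x => v2 x - z2 x)) →
        (∀ᵐ x ∂(volume.restrict (Icc (0:ℝ) 1)), v x - p x ≤ 0) ∧
        (∀ u u1 u2 : ℝ → ℝ, MemC ψ u u1 u2 →
          MemC ψ (fun x => u x + p x - v x) (fun x => u1 x + p1 x - v1 x)
            (fun x => u2 x + p2 x - v2 x))) :=
  obstacle_set_convex_closed_hpr_general ψ
end
end
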